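/- Let f ∈ K_∞[x] and write f(x) = f(0) + Σ_{r ∈ 𝓡} A_r(x^r) for a finite set 𝓡 of positive integers, each coprime to p, and a collection (A_r)_{r ∈ 𝓡} of nonzero additive polynomials. Define g(x) = f(0) + Σ_{r ∈ 𝓡} τ(A_r)·x^r. Then for all ξ ∈ K_∞, one has e(f(ξ)) = e(g(ξ)). -/

import Mathlib

open Polynomial

noncomputable section

/-- The field `K_∞ = F_q((1/t))`, modelled as Laurent series in `X = 1/t`. -/
abbrev Kinf (Fq : Type) [Field Fq] := LaurentSeries Fq

/-- The embedding of the polynomial ring `F_q[t]` into `K_∞`, sending `t` to `X⁻¹`,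
i.e. to the Laurent series with a single coefficient `1` in degree `-1`. -/
def polyToK (Fq : Type) [Field Fq] : Polynomial Fq →+* Kinf Fq :=
  Polynomial.eval₂RingHom (HahnSeries.C : Fq →+* Kinf Fq) (HahnSeries.single (-1 : ℤ) 1)

/-- `α ∈ K_∞` is irrational if it is not a ratio `g/h` with `g, h ∈ F_q[t]`, `h ≠ 0`. -/
def IrrationalK (Fq : Type) [Field Fq] (α : Kinf Fq) : Prop :=
  ¬ ∃ g h : Polynomial Fq, h ≠ 0 ∧ α = polyToK Fq g / polyToK Fq h

/-- Equidistribution in `𝕋`, in the cylinder-set form of Carlitz's definition: for every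
`M ≥ 1` and every tuple `(c_1, …, c_M)` of elements of `F_q`, the proportion of `u` with
`ord u < N` whose value `s u` has coefficient `c_i` at `t^{-i}` for `1 ≤ i ≤ M`
(the coefficient of `t^{-i}` being the `HahnSeries` coefficient at `i`) tends to `q^{-M}`. -/
def Equidistributed (Fq : Type) [Field Fq] [Fintype Fq]
    (s : Polynomial Fq → Kinf Fq) : Prop :=
  ∀ M : ℕ, 1 ≤ M → ∀ c : Fin M → Fq,
    Filter.Tendsto
      (fun N : ℕ =>
        (Nat.card {u : Polynomial Fq //
            u.degree < (N : ℕ) ∧ ∀ i : Fin M, (s u).coeff ((i : ℤ) + 1) = c i} : ℝ)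
          / (Fintype.card Fq : ℝ) ^ N)
      Filter.atTop (nhds (((Fintype.card Fq : ℝ) ^ M)⁻¹))

/-- The finset of polynomials `u ∈ F_q[t]` with `ord u = deg u < N`. -/
def polysDegLT (Fq : Type) [Field Fq] [Fintype Fq] (N : ℕ) : Finset (Polynomial Fq) :=
  letI := Classical.decEq (Polynomial Fq)
  Finset.image
    (fun c : Fin N → Fq => ∑ i : Fin N, Polynomial.C (c i) * Polynomial.X ^ (i : ℕ))
    Finset.univ

/-- The trace map `tr : F_q → F_p`. -/
def trFq (p : ℕ) (Fq : Type) [Field Fq] [CharP Fq p] (a : Fq) : ZMod p :=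
  letI := ZMod.algebra Fq p
  Algebra.trace (ZMod p) Fq a

/-- The additive character `e : K_∞ → ℂ`, `e(α) = exp(2πi·tr(res α)/p)`, where
`res α` is the coefficient of `t^{-1}` in `α`. -/
def eChar (p : ℕ) (Fq : Type) [Field Fq] [CharP Fq p] (α : Kinf Fq) : ℂ :=
  Complex.exp (2 * Real.pi * Complex.I * ((trFq p Fq (α.coeff 1)).val : ℂ) / p)

/-- The map `ψ_l : K_∞ → K_∞`, `ψ_l(Σ_i a_i t^i) = Σ_j a_{pj+l}^{1/p} t^j`, where
`b ↦ b^{1/p} = b^{p^{m-1}}` inverts the Frobenius on `F_q` (`q = p^m`).  In terms of the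
`HahnSeries` (i.e. `X = 1/t`) coefficients, the coefficient of `ψ_l α` at `n` is
`(α.coeff (p*n - l))^(p^(m-1))`. -/
def psiL (p m : ℕ) [Fact p.Prime] (Fq : Type) [Field Fq] (l : ℤ) (α : Kinf Fq) : Kinf Fq where
  coeff := fun n => (α.coeff ((p : ℤ) * n - l)) ^ (p ^ (m - 1))
  isPWO_support' := by
    have hp : (0 : ℤ) < (p : ℤ) := by exact_mod_cast (Fact.out : p.Prime).pos
    have hsub : (Function.support fun n : ℤ =>
        (α.coeff ((p : ℤ) * n - l)) ^ (p ^ (m - 1))) ⊆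
        (fun i : ℤ => (i + l) / (p : ℤ)) '' α.support := by
      intro n hn
      have hne : α.coeff ((p : ℤ) * n - l) ≠ 0 := by
        intro h0
        apply hn
        simp only [Function.mem_support, ne_eq, not_not]
        rw [h0]
        exact zero_pow (pow_ne_zero _ (Fact.out : p.Prime).ne_zero)
      refine ⟨(p : ℤ) * n - l, hne, ?_⟩
      show ((p : ℤ) * n - l + l) / (p : ℤ) = n
      rw [sub_add_cancel, Int.mul_ediv_cancel_left _ (ne_of_gt hp)]
    exact ((α.isPWO_support).image_of_monotone
      (fun a b hab => Int.ediv_le_ediv hp (by omega))).mono hsub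

/-- The map `ψ = ψ_{p-1}` satisfying `e(α ξ^p) = e(ψ(α) ξ)`. -/
def psiK (p m : ℕ) [Fact p.Prime] (Fq : Type) [Field Fq] (α : Kinf Fq) : Kinf Fq :=
  psiL p m Fq ((p : ℤ) - 1) α

/-- A polynomial `A ∈ K_∞[x]` is additive if `A(x+y) = A(x) + A(y)` in `K_∞[x,y]`
(modelled as `K_∞[x][y]`, with `x = C X` and `y = X`). -/
def IsAdditive (Fq : Type) [Field Fq] (A : Polynomial (Kinf Fq)) : Prop :=
  A.eval₂ ((Polynomial.C).comp (Polynomial.C)) (Polynomial.C Polynomial.X + Polynomial.X) =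
    A.eval₂ ((Polynomial.C).comp (Polynomial.C)) (Polynomial.C Polynomial.X) +
      A.eval₂ ((Polynomial.C).comp (Polynomial.C)) (Polynomial.X :
        Polynomial (Polynomial (Kinf Fq)))

/-- The map `τ`: for an additive polynomial `A(x) = Σ_ν α_ν x^{p^ν}` one has
`τ(A) = Σ_ν ψ^ν(α_ν)`. -/
def tauK (p m : ℕ) [Fact p.Prime] (Fq : Type) [Field Fq] (A : Polynomial (Kinf Fq)) :
    Kinf Fq :=
  ∑ ν ∈ Finset.range (A.natDegree + 1), (psiK p m Fq)^[ν] (A.coeff (p ^ ν))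

end



lemma choose_pow_mul_modEq (p : ℕ) [Fact p.Prime] (ν s : ℕ) :
    (p ^ ν * s).choose (p ^ ν) ≡ s [MOD p] := by
  induction ν with
  | zero => simpa using Nat.ModEq.refl s
  | succ ν ih =>
      have hp : 0 < p := (Fact.out : p.Prime).pos
      have h := Choose.choose_modEq_choose_mod_mul_choose_div_nat
        (n := p ^ (ν+1) * s) (k := p ^ (ν+1)) (p := p)
      have hd1 : p ∣ p ^ (ν+1) * s := dvd_mul_of_dvd_left (dvd_pow_self p (Nat.succ_ne_zero ν)) s
      have hd2 : p ∣ p ^ (ν+1) := dvd_pow_self p (Nat.succ_ne_zero ν)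
      have h1 : (p ^ (ν+1) * s) % p = 0 := Nat.mod_eq_zero_of_dvd hd1
      have h2 : (p ^ (ν+1)) % p = 0 := Nat.mod_eq_zero_of_dvd hd2
      have h3 : (p ^ (ν+1) * s) / p = p ^ ν * s := by
        rw [pow_succ, mul_comm (p ^ ν) p, mul_assoc, Nat.mul_div_cancel_left _ hp]
      have h4 : (p ^ (ν+1)) / p = p ^ ν := by
        rw [pow_succ, Nat.mul_div_cancel _ hp]
      rw [h1, h2, h3, h4, Nat.choose_self, one_mul] at h
      exact h.trans ih

lemma exists_choose_not_dvd (p : ℕ) [Fact p.Prime] {k : ℕ} (hk : k ≠ 0)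
    (h : ∀ ν : ℕ, k ≠ p ^ ν) : ∃ j, 0 < j ∧ j < k ∧ ¬ p ∣ k.choose j := by
  classical
  have hp : p.Prime := Fact.out
  set ν := k.factorization p with hν
  set s := k / p ^ ν with hs
  have hks : p ^ ν * s = k := Nat.ordProj_mul_ordCompl_eq_self k p
  have hps : ¬ p ∣ s := Nat.not_dvd_ordCompl hp hk
  have hs1 : s ≠ 1 := fun h1 => h ν (by rw [← hks, h1, mul_one])
  have hs0 : s ≠ 0 := by
    intro h0
    rw [h0, mul_zero] at hks
    exact hk hks.symm
  have hs2 : 1 < s := by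
    have := (Nat.two_le_iff s).2 ⟨hs0, hs1⟩; omega
  refine ⟨p ^ ν, pow_pos hp.pos ν, ?_, ?_⟩
  · calc p ^ ν < p ^ ν * s := (lt_mul_iff_one_lt_right (pow_pos hp.pos ν)).2 hs2
      _ = k := hks
  · intro hdvd
    have hmod := choose_pow_mul_modEq p ν s
    rw [hks] at hmod
    have : s ≡ 0 [MOD p] := hmod.symm.trans (Nat.modEq_zero_iff_dvd.2 hdvd)
    exact hps (Nat.modEq_zero_iff_dvd.1 this)

variable {R : Type*} [CommRing R]

lemma coeff_coeff_eval₂_add (A : R[X]) (i j : ℕ) :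
    ((A.eval₂ ((C : R[X] →+* R[X][X]).comp (C : R →+* R[X]))
        (C X + X)).coeff j).coeff i = A.coeff (i+j) * ((i+j).choose j : R) := by
  classical
  rw [eval₂_eq_sum, Polynomial.sum]
  simp only [RingHom.comp_apply, finset_sum_coeff]
  have hterm : ∀ k ∈ A.support,
      (((C (C (A.coeff k)) * (C X + X) ^ k).coeff j).coeff i)
        = if k = i + j then A.coeff k * (k.choose j : R) else 0 := by
    intro k _
    rw [add_comm (C X) X, coeff_C_mul, coeff_X_add_C_pow, coeff_C_mul]
    rw [mul_comm ((X : R[X]) ^ (k - j)) _, ← Polynomial.C_eq_natCast, coeff_C_mul, coeff_X_pow]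
    by_cases hk : k = i + j
    · subst hk
      simp [Nat.add_sub_cancel]
    · rcases Nat.lt_or_ge k j with hkj | hkj
      · simp [Nat.choose_eq_zero_of_lt hkj, hk]
      · have : i ≠ k - j := by omega
        simp [this, hk]
  rw [Finset.sum_congr rfl hterm, Finset.sum_ite_eq' A.support (i+j)
    (fun k => A.coeff k * (k.choose j : R))]
  by_cases hmem : i + j ∈ A.support
  · simp [hmem]
  · simp only [hmem, if_false]
    rw [Polynomial.notMem_support_iff.1 hmem, zero_mul]

lemma additive_coeff_rel (A : R[X])
    (hA : A.eval₂ ((C : R[X] →+* R[X][X]).comp (C : R →+* R[X])) (C X + X) =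
      A.eval₂ ((C : R[X] →+* R[X][X]).comp (C : R →+* R[X])) (C X) +
        A.eval₂ ((C : R[X] →+* R[X][X]).comp (C : R →+* R[X])) X) (i j : ℕ) :
    A.coeff (i+j) * ((i+j).choose j : R) =
      (if j = 0 then A.coeff i else 0) + (if i = 0 then A.coeff j else 0) := by
  classical
  have h1 : A.eval₂ ((C : R[X] →+* R[X][X]).comp (C : R →+* R[X])) (C X) = C A := by
    have := Polynomial.hom_eval₂ A (C : R →+* R[X]) (C : R[X] →+* R[X][X]) X
    rw [eval₂_C_X] at this
    exact this.symm
  have h2 : A.eval₂ ((C : R[X] →+* R[X][X]).comp (C : R →+* R[X])) X = A.map C := rfl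
  rw [h1, h2] at hA
  have h := congrArg (fun Q => (Q.coeff j).coeff i) hA
  rw [coeff_coeff_eval₂_add] at h
  rw [h]
  by_cases hi : i = 0 <;> by_cases hj : j = 0 <;>
    simp [Polynomial.coeff_C, Polynomial.coeff_map,
      apply_ite (fun q : R[X] => q.coeff i), hi, hj]

lemma additive_coeff_eq_zero {p : ℕ} [Fact p.Prime] [CharP R p] [IsDomain R] (A : R[X])
    (hA : A.eval₂ ((C : R[X] →+* R[X][X]).comp (C : R →+* R[X])) (C X + X) =
      A.eval₂ ((C : R[X] →+* R[X][X]).comp (C : R →+* R[X])) (C X) +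
        A.eval₂ ((C : R[X] →+* R[X][X]).comp (C : R →+* R[X])) X)
    {k : ℕ} (hk : ∀ ν : ℕ, k ≠ p ^ ν) : A.coeff k = 0 := by
  classical
  rcases Nat.eq_zero_or_pos k with rfl | hk0
  · have h := additive_coeff_rel A hA 0 0
    simpa using h
  · obtain ⟨j, hj0, hjk, hnd⟩ := exists_choose_not_dvd p hk0.ne' hk
    have hkj : k - j + j = k := Nat.sub_add_cancel hjk.le
    have h := additive_coeff_rel A hA (k - j) j
    rw [hkj, if_neg hj0.ne', if_neg (by omega : k - j ≠ 0), add_zero] at h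
    have hχ : ((k.choose j : ℕ) : R) ≠ 0 := by
      intro h0
      exact hnd ((CharP.cast_eq_zero_iff R p _).1 h0)
    rcases mul_eq_zero.1 h with h' | h'
    · exact h'
    · exact absurd h' hχ


variable {R : Type*} [CommRing R]
lemma additive_eval {p : ℕ} [Fact p.Prime] [CharP R p] [IsDomain R] (A : R[X])
    (hA : A.eval₂ ((C : R[X] →+* R[X][X]).comp (C : R →+* R[X])) (C X + X) =
      A.eval₂ ((C : R[X] →+* R[X][X]).comp (C : R →+* R[X])) (C X) +
        A.eval₂ ((C : R[X] →+* R[X][X]).comp (C : R →+* R[X])) X)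
    (x : R) :
    A.eval x = ∑ ν ∈ Finset.range (A.natDegree + 1), A.coeff (p ^ ν) * x ^ (p ^ ν) := by
  classical
  have hp1 : 1 < p := (Fact.out : p.Prime).one_lt
  rw [eval_eq_sum_range]
  set d := A.natDegree with hd
  calc ∑ k ∈ Finset.range (d+1), A.coeff k * x ^ k
      = ∑ k ∈ (Finset.range (d+1)).filter (fun k => ∃ ν : ℕ, k = p ^ ν),
          A.coeff k * x ^ k := by
        refine (Finset.sum_filter_of_ne ?_).symm
        intro k _ hne
        by_contra hnex
        push_neg at hnex
        rw [additive_coeff_eq_zero A hA hnex, zero_mul] at hne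
        exact hne rfl
    _ = ∑ ν ∈ (Finset.range (d+1)).filter (fun ν => p ^ ν ≤ d),
          A.coeff (p ^ ν) * x ^ (p ^ ν) := by
        refine Finset.sum_nbij' (fun k => Nat.log p k) (fun ν => p ^ ν) ?_ ?_ ?_ ?_ ?_
        · intro k hk
          simp only [Finset.mem_filter, Finset.mem_range] at hk ⊢
          obtain ⟨hkr, ν, rfl⟩ := hk
          simp [Nat.log_pow hp1]
          exact ⟨Nat.lt_succ_iff.mp (lt_of_le_of_lt (Nat.le_of_lt (Nat.lt_pow_self (n := ν) hp1)) hkr), by omega⟩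
        · intro ν hν
          simp only [Finset.mem_filter, Finset.mem_range] at hν ⊢
          exact ⟨by omega, ⟨ν, rfl⟩⟩
        · intro k hk
          simp only [Finset.mem_filter, Finset.mem_range] at hk
          obtain ⟨-, ν, rfl⟩ := hk
          simp [Nat.log_pow hp1]
        · intro ν hν
          simp [Nat.log_pow hp1]
        · intro k hk
          simp only [Finset.mem_filter, Finset.mem_range] at hk
          obtain ⟨-, ν, rfl⟩ := hk
          simp [Nat.log_pow hp1]
    _ = ∑ ν ∈ Finset.range (d+1), A.coeff (p ^ ν) * x ^ (p ^ ν) := by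
        refine Finset.sum_filter_of_ne ?_
        intro ν _ hne
        by_contra hgt
        push_neg at hgt
        rw [Polynomial.coeff_eq_zero_of_natDegree_lt hgt, zero_mul] at hne
        exact hne rfl


variable {Fq : Type} [Field Fq] {p : ℕ} [Fact p.Prime] [CharP Fq p]

lemma lsCharP : CharP (LaurentSeries Fq) p :=
  charP_of_injective_ringHom (f := (HahnSeries.C : Fq →+* HahnSeries ℤ Fq))
    HahnSeries.C_injective p

lemma hahn_sum_coeff {σ : Type*} (s : Finset σ) (f : σ → HahnSeries ℤ Fq) (g : ℤ) :
    (∑ i ∈ s, f i).coeff g = ∑ i ∈ s, (f i).coeff g := by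
  classical
  induction s using Finset.induction with
  | empty => simp
  | insert _ _ h ih => rw [Finset.sum_insert h, Finset.sum_insert h, HahnSeries.coeff_add, ih]

lemma hahn_mul_coeff_eq_zero {x y : HahnSeries ℤ Fq} {N M i : ℤ}
    (hx : ∀ j < N, x.coeff j = 0) (hy : ∀ j < M, y.coeff j = 0) (hi : i < N + M) :
    (x * y).coeff i = 0 := by
  rw [HahnSeries.coeff_mul]
  apply Finset.sum_eq_zero
  intro ij hij
  rw [Finset.mem_addAntidiagonal] at hij
  obtain ⟨h1, h2, h3⟩ := hij
  rcases lt_or_ge ij.1 N with hlt | hge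
  · exact absurd (hx _ hlt) h1
  · have : ij.2 < M := by omega
    exact absurd (hy _ this) h2

lemma hahn_pow_coeff_eq_zero {x : HahnSeries ℤ Fq} {N : ℤ} (hN : 0 ≤ N)
    (hx : ∀ j < N, x.coeff j = 0) :
    ∀ k : ℕ, 1 ≤ k → ∀ i < (k : ℤ) * N, (x ^ k).coeff i = 0 := by
  intro k
  induction k with
  | zero => omega
  | succ k ih =>
      intro _ i hi
      rcases Nat.eq_zero_or_pos k with rfl | hk
      · simpa using hx i (by simpa using hi)
      · rw [pow_succ]
        refine hahn_mul_coeff_eq_zero (N := (k : ℤ) * N) (M := N) (ih hk) hx ?_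
        push_cast at hi ⊢
        linarith

lemma hahn_coeff_pow_char (ξ : LaurentSeries Fq) (n : ℤ) :
    (ξ ^ p).coeff n = if (p : ℤ) ∣ n then (ξ.coeff (n / p)) ^ p else 0 := by
  classical
  haveI := lsCharP (Fq := Fq) (p := p)
  have hp2 : 2 ≤ p := (Fact.out : p.Prime).two_le
  set N : ℤ := |n| + 1 with hNdef
  have hN0 : 0 < N := by positivity
  have hnN : n < N := by
    have := le_abs_self n; omega
  have hSfin : (ξ.support ∩ Set.Iio N).Finite := by
    by_cases hξ : ξ = 0
    · simp [hξ]
    · refine (Set.finite_Icc ξ.order N).subset ?_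
      rintro a ⟨ha1, ha2⟩
      exact ⟨HahnSeries.order_le_of_coeff_ne_zero ha1, le_of_lt ha2⟩
  set P : LaurentSeries Fq := ∑ i ∈ hSfin.toFinset, HahnSeries.single i (ξ.coeff i) with hP
  set h : LaurentSeries Fq := ξ - P with hh
  have hPcoeff : ∀ j, P.coeff j = if j ∈ hSfin.toFinset then ξ.coeff j else 0 := by
    intro j
    rw [hP, hahn_sum_coeff]
    by_cases hmem : j ∈ hSfin.toFinset
    · rw [if_pos hmem, Finset.sum_eq_single_of_mem j hmem
        (fun b _ hbj => by
          rw [HahnSeries.coeff_single, if_neg (fun hcontra => hbj hcontra.symm)]),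
        HahnSeries.coeff_single_same]
    · rw [if_neg hmem]
      apply Finset.sum_eq_zero
      intro b hb
      rw [HahnSeries.coeff_single, if_neg]
      intro hcontra
      subst hcontra
      exact hmem hb
  have hhcoeff : ∀ j < N, h.coeff j = 0 := by
    intro j hj
    rw [hh, HahnSeries.coeff_sub, hPcoeff j]
    by_cases hjs : ξ.coeff j = 0
    · by_cases hmem : j ∈ hSfin.toFinset <;> simp [hmem, hjs]
    · have hmem : j ∈ hSfin.toFinset := by
        rw [Set.Finite.mem_toFinset]
        exact ⟨hjs, hj⟩
      simp [hmem]
  have hsplit : ξ ^ p = P ^ p + h ^ p := by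
    have hξPh : ξ = P + h := by rw [hh]; ring
    rw [hξPh, add_pow_char]
  have hhp : (h ^ p).coeff n = 0 := by
    refine hahn_pow_coeff_eq_zero hN0.le hhcoeff p (by omega) n ?_
    have : (1 : ℤ) * N ≤ (p : ℤ) * N := by
      have : (1 : ℤ) ≤ (p : ℤ) := by exact_mod_cast Nat.one_le_of_lt hp2
      nlinarith
    omega
  have hPp : (P ^ p).coeff n
      = ∑ i ∈ hSfin.toFinset, if n = (p : ℤ) * i then (ξ.coeff i) ^ p else 0 := by
    rw [hP, sum_pow_char, hahn_sum_coeff]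
    refine Finset.sum_congr rfl ?_
    intro i _
    have hsm : (p • i : ℤ) = (p : ℤ) * i := nsmul_eq_mul p i
    rw [HahnSeries.single_pow, hsm, HahnSeries.coeff_single]
    convert rfl
  rw [hsplit, HahnSeries.coeff_add, hhp, add_zero, hPp]
  by_cases hdvd : (p : ℤ) ∣ n
  · obtain ⟨k, hk⟩ := hdvd
    have hpne : (p : ℤ) ≠ 0 := by positivity
    have hnk : n / (p : ℤ) = k := by rw [hk]; exact Int.mul_ediv_cancel_left _ hpne
    have hcond : ∀ i ∈ hSfin.toFinset, (n = (p:ℤ) * i) ↔ (i = k) := by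
      intro i _
      constructor
      · intro hni
        have : (p:ℤ) * i = (p:ℤ) * k := by omega
        exact mul_left_cancel₀ hpne this
      · rintro rfl; omega
    rw [Finset.sum_congr rfl (fun i hi => if_congr (hcond i hi) rfl rfl),
      Finset.sum_ite_eq' hSfin.toFinset k (fun i => (ξ.coeff i) ^ p)]
    have hdvd' : (p : ℤ) ∣ n := ⟨k, hk⟩
    by_cases hmem : k ∈ hSfin.toFinset
    · rw [if_pos hmem, if_pos hdvd', hnk]
    · rw [if_neg hmem, if_pos hdvd', hnk]
      rw [Set.Finite.mem_toFinset] at hmem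
      have hkN : k < N := by
        rcases le_or_gt 0 k with hk0 | hk0
        · have hple : (2:ℤ) ≤ (p:ℤ) := by exact_mod_cast hp2
          have : k ≤ n := by nlinarith
          omega
        · omega
      have hc0 : ξ.coeff k = 0 := by
        by_contra hne
        exact hmem ⟨hne, hkN⟩
      rw [hc0, zero_pow (by omega : p ≠ 0)]
  · rw [if_neg hdvd]
    apply Finset.sum_eq_zero
    intro i _
    rw [if_neg (fun hni => hdvd ⟨i, hni⟩)]

section PsiMul

variable (p m : ℕ) [Fact p.Prime] (Fq : Type) [Field Fq] [Fintype Fq] [CharP Fq p]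

lemma psiK_coeff (α : Kinf Fq) (n : ℤ) :
    (psiK p m Fq α).coeff n = (α.coeff ((p : ℤ) * n - ((p : ℤ) - 1))) ^ (p ^ (m - 1)) := rfl

lemma psiK_mul (hm : m ≠ 0) (hq : Fintype.card Fq = p ^ m) (α ξ : Kinf Fq) :
    psiK p m Fq (α * ξ ^ p) = psiK p m Fq α * ξ := by
  classical
  have hp2 : 2 ≤ p := (Fact.out : p.Prime).two_le
  have he0 : (p : ℤ) ≠ 0 := by positivity
  have hq' : p ^ (m - 1) ≠ 0 := pow_ne_zero _ (by omega)
  have hpm : p * p ^ (m - 1) = p ^ m := by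
    conv_rhs => rw [show m = m - 1 + 1 by omega]
    rw [pow_succ']
  refine HahnSeries.coeff_injective (funext fun n => ?_)
  rw [psiK_coeff, HahnSeries.coeff_mul, HahnSeries.coeff_mul, sum_pow_char_pow]
  refine Finset.sum_nbij' (fun ab => ((ab.1 + ((p:ℤ) - 1)) / p, ab.2 / p))
    (fun ik => ((p:ℤ) * ik.1 - ((p:ℤ) - 1), (p:ℤ) * ik.2)) ?_ ?_ ?_ ?_ ?_
  · -- forward membership
    rintro ⟨a, b⟩ hab
    rw [Finset.mem_addAntidiagonal] at hab
    obtain ⟨ha, hb, hsum⟩ := hab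
    dsimp only at ha hb hsum ⊢
    rw [HahnSeries.mem_support] at ha hb
    rw [hahn_coeff_pow_char] at hb
    rw [Finset.mem_addAntidiagonal]
    by_cases hd : (p:ℤ) ∣ b
    · rw [if_pos hd] at hb
      obtain ⟨k, hk⟩ := hd
      have hbk : b / (p:ℤ) = k := by rw [hk]; exact Int.mul_ediv_cancel_left _ he0
      have hda : (p:ℤ) ∣ a + ((p:ℤ) - 1) := ⟨n - k, by rw [mul_sub]; omega⟩
      obtain ⟨i, hi⟩ := hda
      have hai : (a + ((p:ℤ) - 1)) / p = i := by rw [hi]; exact Int.mul_ediv_cancel_left _ he0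
      refine ⟨?_, ?_, ?_⟩
      · dsimp only
        rw [HahnSeries.mem_support, psiK_coeff, hai]
        have hia : (p:ℤ) * i - ((p:ℤ) - 1) = a := by omega
        rw [hia]
        exact pow_ne_zero _ ha
      · dsimp only
        rw [HahnSeries.mem_support, hbk]
        rw [hbk] at hb
        intro hc
        rw [hc, zero_pow (by omega : p ≠ 0)] at hb
        exact hb rfl
      · dsimp only
        rw [hai, hbk]
        have hsum2 : (p:ℤ) * (i + k) = (p:ℤ) * n := by rw [mul_add]; omega
        have := mul_left_cancel₀ he0 hsum2
        omega
    · rw [if_neg hd] at hb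
      exact absurd rfl hb
  · -- backward membership
    rintro ⟨i, k⟩ hik
    rw [Finset.mem_addAntidiagonal] at hik
    obtain ⟨hi, hk, hsum⟩ := hik
    dsimp only at hi hk hsum ⊢
    rw [HahnSeries.mem_support] at hi hk
    rw [psiK_coeff] at hi
    rw [Finset.mem_addAntidiagonal]
    refine ⟨?_, ?_, ?_⟩
    · dsimp only
      rw [HahnSeries.mem_support]
      intro hc
      rw [hc] at hi
      exact hi (zero_pow hq')
    · dsimp only
      rw [HahnSeries.mem_support, hahn_coeff_pow_char, if_pos ⟨k, rfl⟩,
        Int.mul_ediv_cancel_left _ he0]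
      exact pow_ne_zero _ hk
    · dsimp only
      have hsum2 : (p:ℤ) * i + (p:ℤ) * k = (p:ℤ) * n := by rw [← mul_add, hsum]
      omega
  · -- left inverse
    rintro ⟨a, b⟩ hab
    rw [Finset.mem_addAntidiagonal] at hab
    obtain ⟨ha, hb, hsum⟩ := hab
    dsimp only at ha hb hsum ⊢
    rw [HahnSeries.mem_support, hahn_coeff_pow_char] at hb
    by_cases hd : (p:ℤ) ∣ b
    · obtain ⟨k, hk⟩ := hd
      have hbk : b / (p:ℤ) = k := by rw [hk]; exact Int.mul_ediv_cancel_left _ he0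
      have hda : (p:ℤ) ∣ a + ((p:ℤ) - 1) := ⟨n - k, by rw [mul_sub]; omega⟩
      obtain ⟨i, hi⟩ := hda
      have hai : (a + ((p:ℤ) - 1)) / p = i := by rw [hi]; exact Int.mul_ediv_cancel_left _ he0
      rw [hai, hbk, Prod.mk.injEq]
      exact ⟨by omega, by omega⟩
    · rw [if_neg hd] at hb
      exact absurd rfl hb
  · -- right inverse
    rintro ⟨i, k⟩ _
    dsimp only
    rw [Prod.mk.injEq]
    constructor
    · rw [sub_add_cancel, Int.mul_ediv_cancel_left _ he0]
    · rw [Int.mul_ediv_cancel_left _ he0]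
  · -- values
    rintro ⟨a, b⟩ hab
    rw [Finset.mem_addAntidiagonal] at hab
    obtain ⟨ha, hb, hsum⟩ := hab
    dsimp only at ha hb hsum ⊢
    rw [HahnSeries.mem_support, hahn_coeff_pow_char] at hb
    by_cases hd : (p:ℤ) ∣ b
    · obtain ⟨k, hk⟩ := hd
      have hbk : b / (p:ℤ) = k := by rw [hk]; exact Int.mul_ediv_cancel_left _ he0
      have hda : (p:ℤ) ∣ a + ((p:ℤ) - 1) := ⟨n - k, by rw [mul_sub]; omega⟩
      obtain ⟨i, hi⟩ := hda
      have hai : (a + ((p:ℤ) - 1)) / p = i := by rw [hi]; exact Int.mul_ediv_cancel_left _ he0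
      have hia : (p:ℤ) * i - ((p:ℤ) - 1) = a := by omega
      rw [hahn_coeff_pow_char, if_pos ⟨k, hk⟩, hbk, psiK_coeff, hai, hia]
      calc (α.coeff a * ξ.coeff k ^ p) ^ p ^ (m - 1)
          = α.coeff a ^ p ^ (m - 1) * ξ.coeff k ^ (p * p ^ (m - 1)) := by
            rw [mul_pow, ← pow_mul]
        _ = α.coeff a ^ p ^ (m - 1) * ξ.coeff k := by
            rw [hpm, ← hq, FiniteField.pow_card]
    · rw [if_neg hd] at hb
      exact absurd rfl hb

end PsiMul

section TraceLemmas

variable (p : ℕ) [Fact p.Prime] (Fq : Type) [Field Fq] [Fintype Fq] [CharP Fq p]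

lemma trFq_add (a b : Fq) : trFq p Fq (a + b) = trFq p Fq a + trFq p Fq b := by
  letI := ZMod.algebra Fq p
  simp only [trFq]
  exact map_add _ a b

lemma trFq_zero : trFq p Fq 0 = 0 := by
  letI := ZMod.algebra Fq p
  simp only [trFq]
  exact map_zero _

lemma trFq_frob (a : Fq) : trFq p Fq (a ^ p) = trFq p Fq a := by
  letI := ZMod.algebra Fq p
  haveI : ExpChar Fq p := ExpChar.prime Fact.out
  let σ : Fq ≃ₐ[ZMod p] Fq := AlgEquiv.ofRingEquiv (f := frobeniusEquiv Fq p)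
    (fun x => RingHom.congr_fun (RingHom.ext_zmod
      (((frobeniusEquiv Fq p : Fq ≃+* Fq) : Fq →+* Fq).comp (algebraMap (ZMod p) Fq))
      (algebraMap (ZMod p) Fq)) x)
  have h := Algebra.trace_eq_of_algEquiv σ a
  have hσ : σ a = a ^ p := rfl
  rw [hσ] at h
  simpa only [trFq] using h

lemma trFq_pow_frob (j : ℕ) (a : Fq) : trFq p Fq (a ^ (p ^ j)) = trFq p Fq a := by
  induction j generalizing a with
  | zero => simp
  | succ j ih =>
      rw [pow_succ, pow_mul, trFq_frob, ih]

end TraceLemmas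

section ECharLemmas

variable (p : ℕ) [Fact p.Prime] (Fq : Type) [Field Fq] [Fintype Fq] [CharP Fq p]

lemma echar_eq_of_trFq_eq {α β : Kinf Fq}
    (h : trFq p Fq (α.coeff 1) = trFq p Fq (β.coeff 1)) :
    eChar p Fq α = eChar p Fq β := by
  simp only [eChar, h]

lemma exp_nat_modEq {x y : ℕ} (h : x ≡ y [MOD p]) :
    Complex.exp (2 * Real.pi * Complex.I * (x : ℂ) / p) =
      Complex.exp (2 * Real.pi * Complex.I * (y : ℂ) / p) := by
  have hp0 : (p : ℂ) ≠ 0 := by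
    exact_mod_cast (Nat.cast_ne_zero (R := ℂ)).2 (Fact.out : p.Prime).ne_zero
  obtain ⟨t, ht⟩ := h.dvd
  have hy : (y : ℂ) = (x : ℂ) + (p : ℂ) * (t : ℂ) := by
    have : (y : ℤ) = (x : ℤ) + (p : ℤ) * t := by omega
    exact_mod_cast congrArg (fun z : ℤ => (z : ℂ)) this
  have harg : 2 * Real.pi * Complex.I * (y : ℂ) / p
      = 2 * Real.pi * Complex.I * (x : ℂ) / p + (t : ℂ) * (2 * Real.pi * Complex.I) := by
    rw [hy]
    field_simp
  rw [harg, Complex.exp_add, Complex.exp_int_mul_two_pi_mul_I, mul_one]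

lemma echar_add (α β : Kinf Fq) :
    eChar p Fq (α + β) = eChar p Fq α * eChar p Fq β := by
  haveI : NeZero p := ⟨(Fact.out : p.Prime).ne_zero⟩
  simp only [eChar, HahnSeries.coeff_add, trFq_add]
  set a := trFq p Fq (α.coeff 1)
  set b := trFq p Fq (β.coeff 1)
  have h1 : (a + b).val ≡ a.val + b.val [MOD p] := by
    rw [ZMod.val_add]
    exact (Nat.mod_modEq _ p)
  rw [exp_nat_modEq p h1, ← Complex.exp_add]
  congr 1
  push_cast
  ring

lemma echar_zero : eChar p Fq 0 = 1 := by
  haveI : NeZero p := ⟨(Fact.out : p.Prime).ne_zero⟩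
  simp [eChar, trFq_zero]

lemma echar_sum {σ : Type*} (s : Finset σ) (f : σ → Kinf Fq) :
    eChar p Fq (∑ i ∈ s, f i) = ∏ i ∈ s, eChar p Fq (f i) := by
  classical
  induction s using Finset.induction with
  | empty => simpa using echar_zero p Fq
  | insert _ _ h ih =>
      rw [Finset.sum_insert h, Finset.prod_insert h, echar_add, ih]

end ECharLemmas


section Final

variable (p m : ℕ) [Fact p.Prime] (Fq : Type) [Field Fq] [Fintype Fq] [CharP Fq p]

lemma echar_psiK (hm : m ≠ 0) (β : Kinf Fq) :
    eChar p Fq (psiK p m Fq β) = eChar p Fq β := by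
  apply echar_eq_of_trFq_eq
  rw [psiK_coeff]
  have h1 : (p : ℤ) * 1 - ((p : ℤ) - 1) = 1 := by ring
  rw [h1, trFq_pow_frob]

lemma echar_mul_pow (hm : m ≠ 0) (hq : Fintype.card Fq = p ^ m) (ν : ℕ) :
    ∀ α η : Kinf Fq,
      eChar p Fq (α * η ^ (p ^ ν)) = eChar p Fq ((psiK p m Fq)^[ν] α * η) := by
  induction ν with
  | zero => intro α η; rw [pow_zero, pow_one, Function.iterate_zero, id]
  | succ ν ih =>
      intro α η
      have h1 : η ^ (p ^ (ν + 1)) = (η ^ p) ^ (p ^ ν) := by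
        rw [← pow_mul, ← pow_succ']
      rw [h1, ih α (η ^ p), ← echar_psiK p m Fq hm ((psiK p m Fq)^[ν] α * η ^ p),
        psiK_mul p m Fq hm hq, Function.iterate_succ_apply']

lemma echar_additive_eval (hm : m ≠ 0) (hq : Fintype.card Fq = p ^ m)
    (A : Polynomial (Kinf Fq)) (hA : IsAdditive Fq A) (η : Kinf Fq) :
    eChar p Fq (A.eval η) = eChar p Fq (tauK p m Fq A * η) := by
  haveI := lsCharP (Fq := Fq) (p := p)
  have hA' : A.eval₂ ((Polynomial.C).comp (Polynomial.C))
        (Polynomial.C Polynomial.X + Polynomial.X) =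
      A.eval₂ ((Polynomial.C).comp (Polynomial.C)) (Polynomial.C Polynomial.X) +
        A.eval₂ ((Polynomial.C).comp (Polynomial.C))
          (Polynomial.X : Polynomial (Polynomial (Kinf Fq))) := hA
  rw [additive_eval (p := p) A hA' η, tauK, echar_sum, Finset.sum_mul, echar_sum]
  refine Finset.prod_congr rfl fun ν _ => ?_
  exact echar_mul_pow p m Fq hm hq ν (A.coeff (p ^ ν)) η

end Final

/-- Lemma 3.2.  With `f(x) = f(0) + Σ_{r ∈ 𝓡} A_r(x^r)` as in Lemma 3.1
and `g(x) = f(0) + Σ_{r ∈ 𝓡} τ(A_r) x^r`, one has `e(f(ξ)) = e(g(ξ))` for all `ξ ∈ K_∞`. -/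
theorem statement8 (p m : ℕ) [Fact p.Prime] (hm : m ≠ 0)
    (Fq : Type) [Field Fq] [Fintype Fq] [CharP Fq p] (hq : Fintype.card Fq = p ^ m)
    (f : Polynomial (Kinf Fq)) (R : Finset ℕ) (A : ℕ → Polynomial (Kinf Fq))
    (hR : ∀ r ∈ R, 0 < r ∧ Nat.Coprime r p ∧ IsAdditive Fq (A r) ∧ A r ≠ 0)
    (hf : f = Polynomial.C (f.eval 0) + ∑ r ∈ R, (A r).comp (Polynomial.X ^ r))
    (g : Polynomial (Kinf Fq))
    (hg : g = Polynomial.C (f.eval 0) +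
      ∑ r ∈ R, Polynomial.C (tauK p m Fq (A r)) * Polynomial.X ^ r)
    (ξ : Kinf Fq) :
    eChar p Fq (f.eval ξ) = eChar p Fq (g.eval ξ) := by
  classical
  rw [hf, hg]
  simp only [Polynomial.eval_add, Polynomial.eval_C, Polynomial.eval_finset_sum]
  rw [echar_add, echar_add, echar_sum, echar_sum]
  congr 1
  refine Finset.prod_congr rfl fun r hr => ?_
  rw [Polynomial.eval_comp, Polynomial.eval_pow, Polynomial.eval_X,
    Polynomial.eval_mul, Polynomial.eval_C, Polynomial.eval_pow, Polynomial.eval_X]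
  exact echar_additive_eval p m Fq hm hq (A r) ((hR r hr).2.2.1) (ξ ^ r)
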